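/- Let P be a decision procedure on List2 X that is strongly inductive (SIND) and satisfies T-independence of irrelevant alternatives (TIIA). Then the choice correspondence C_P is rationalizable, i.e. there exists a complete and transitive relation ⪰ on X such that for every nonempty finite A : Finset X, C_P(A) = {x ∈ A : ∀ y ∈ A, x ⪰ y}. -/

import Mathlib

/-- The algebraic datatype `List2 X` of nonempty lists built from singletons and
concatenation. -/
inductive List2 (X : Type) : Type where
  | Sing2 : X → List2 X
  | Cat : List2 X → List2 X → List2 X

variable {X : Type} [DecidableEq X]

/-- The extension of a represented decision problem: the set of alternatives it
contains. -/
def List2.ext : List2 X → Finset X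
  | .Sing2 x => {x}
  | .Cat a b => a.ext ∪ b.ext

theorem List2.ext_nonempty : ∀ a : List2 X, a.ext.Nonempty
  | .Sing2 x => ⟨x, by simp [List2.ext]⟩
  | .Cat a b => (List2.ext_nonempty a).mono (by simp [List2.ext, Finset.subset_union_left])

/-!
By SIND, `P (Cat a b)` depends only on `P a` and `P b`: it is `binChoice P (P a) (P b)`, the
choice made on a two-leaf list. So the candidate relation is `Beats P x y`: `x` wins the
two-leaf contest against `y` in at least one order. The core fact is that `P a` beats every
alternative of `a`, by induction on the number of alternatives: if `x` is chosen from `a₁` in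
`Cat a₁ a₂` while `a₂` chooses some `y ≠ x`, TIIA replaces `a₂` by a list in which `y` is traded
for `x`, and the result still chooses `x` but has fewer alternatives. Transitivity, and the
description of `C_P` as the set of `Beats`-maximal elements, follow by assembling lists with `Cat`.
-/

namespace List2

@[simp] lemma ext_sing2 (x : X) : (Sing2 x).ext = {x} := rfl

@[simp] lemma ext_cat (a b : List2 X) : (Cat a b).ext = a.ext ∪ b.ext := rfl

omit [DecidableEq X] in
def StronglyInductive (P : List2 X → X) : Prop :=
  ∀ x y : X,
    (∀ a b : List2 X, P a = x → P b = y → P (Cat a b) = x) ∨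
    (∀ a b : List2 X, P a = x → P b = y → P (Cat a b) = y)

def SatisfiesTIIA (P : List2 X → X) : Prop :=
  (∀ (a₁ a₂ : List2 X) (x y : X), P (Cat a₁ a₂) = x → P a₁ = y → y ≠ x →
    ∃ b : List2 X, b.ext = (a₁.ext \ {y}) ∪ {x} ∧ P (Cat b a₂) = x) ∧
  (∀ (a₁ a₂ : List2 X) (x y : X), P (Cat a₁ a₂) = x → P a₂ = y → y ≠ x →
    ∃ b : List2 X, b.ext = (a₂.ext \ {y}) ∪ {x} ∧ P (Cat a₁ b) = x)

omit [DecidableEq X] in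
def binChoice (P : List2 X → X) (x y : X) : X :=
  P (Cat (Sing2 x) (Sing2 y))

omit [DecidableEq X] in
def Beats (P : List2 X → X) (x y : X) : Prop :=
  binChoice P x y = x ∨ binChoice P y x = x

section DecisionProcedure

variable {P : List2 X → X}

lemma P_sing2 (hP : ∀ a, P a ∈ a.ext) (x : X) : P (Sing2 x) = x := by
  simpa using hP (Sing2 x)

lemma binChoice_eq_or (hP : ∀ a, P a ∈ a.ext) (x y : X) :
    binChoice P x y = x ∨ binChoice P x y = y := by
  simpa [binChoice] using hP (Cat (Sing2 x) (Sing2 y))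

lemma binChoice_self (hP : ∀ a, P a ∈ a.ext) (x : X) : binChoice P x x = x := by
  simpa [binChoice] using hP (Cat (Sing2 x) (Sing2 x))

omit [DecidableEq X] in
lemma P_cat_eq_or (hS : StronglyInductive P) (a b : List2 X) :
    P (Cat a b) = P a ∨ P (Cat a b) = P b :=
  (hS (P a) (P b)).imp (fun h => h a b rfl rfl) (fun h => h a b rfl rfl)

lemma P_cat (hP : ∀ a, P a ∈ a.ext) (hS : StronglyInductive P) (a b : List2 X) :
    P (Cat a b) = binChoice P (P a) (P b) := by
  have hsing : ∀ a, P (Sing2 (P a)) = P a := fun a => P_sing2 hP (P a)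
  rcases hS (P a) (P b) with h | h <;> rw [h a b rfl rfl, binChoice, h _ _ (hsing a) (hsing b)]

lemma beats_total (hP : ∀ a, P a ∈ a.ext) (x y : X) : Beats P x y ∨ Beats P y x :=
  (binChoice_eq_or hP x y).imp Or.inl Or.inr

lemma exists_ext_pair_of_beats {x y : X} (h : Beats P x y) :
    ∃ c : List2 X, c.ext = {x, y} ∧ P c = x := by
  rcases h with h | h
  · exact ⟨Cat (Sing2 x) (Sing2 y), rfl, h⟩
  · exact ⟨Cat (Sing2 y) (Sing2 x), Finset.union_comm _ _, h⟩

lemma exists_ext_insert_of_forall_beats (hP : ∀ a, P a ∈ a.ext) (hS : StronglyInductive P)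
    {x : X} (A : Finset X) (h : ∀ y ∈ A, Beats P x y) :
    ∃ a : List2 X, a.ext = insert x A ∧ P a = x := by
  induction A using Finset.induction_on with
  | empty => exact ⟨Sing2 x, rfl, P_sing2 hP x⟩
  | insert v A _ ih =>
    obtain ⟨t, ht, hPt⟩ := ih fun y hy => h y (Finset.mem_insert_of_mem hy)
    obtain ⟨c, hc, hPc⟩ := exists_ext_pair_of_beats (h v (Finset.mem_insert_self v A))
    refine ⟨Cat t c, ?_, ?_⟩
    · ext w
      simp only [ext_cat, ht, hc, Finset.mem_union, Finset.mem_insert, Finset.mem_singleton]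
      tauto
    · rw [P_cat hP hS, hPt, hPc, binChoice_self hP]

end DecisionProcedure

section TIIA

variable {P : List2 X → X} (hP : ∀ a, P a ∈ a.ext) (hS : StronglyInductive P)
  (hT : SatisfiesTIIA P) {a₁ a₂ : List2 X} {x z : X}
include hP hS hT

lemma beats_or_exists_smaller_of_left_wins (hx : P (Cat a₁ a₂) = x) (h₁ : P a₁ = x) (h₂ : P a₂ ≠ x)
    (hz : z ∈ a₂.ext) :
    Beats P x z ∨ ∃ b : List2 X, P b = x ∧ z ∈ b.ext ∧ b.ext.card < (Cat a₁ a₂).ext.card := by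
  have hwin : binChoice P x (P a₂) = x :=
    calc binChoice P x (P a₂) = P (Cat a₁ a₂) := by rw [P_cat hP hS, h₁]
      _ = x := hx
  by_cases hz₂ : z = P a₂
  · exact Or.inl (Or.inl (hz₂ ▸ hwin))
  have hxa₁ : x ∈ a₁.ext := h₁ ▸ hP a₁
  obtain ⟨b, hb, hPb⟩ := hT.2 (Sing2 x) a₂ x (P a₂) (by rwa [P_cat hP hS, P_sing2 hP]) rfl h₂
  have hsub : (Cat (Sing2 x) b).ext ⊆ (Cat a₁ a₂).ext.erase (P a₂) := by
    intro w
    simp only [ext_cat, ext_sing2, hb, Finset.mem_union, Finset.mem_singleton, Finset.mem_sdiff,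
      Finset.mem_erase]
    rintro (rfl | ⟨hw, hne⟩ | rfl)
    exacts [⟨Ne.symm h₂, Or.inl hxa₁⟩, ⟨hne, Or.inr hw⟩, ⟨Ne.symm h₂, Or.inl hxa₁⟩]
  refine Or.inr ⟨Cat (Sing2 x) b, hPb, by simp [hb, hz, hz₂], Finset.card_lt_card ?_⟩
  exact hsub.trans_ssubset (Finset.erase_ssubset (Finset.mem_union_right _ (hP a₂)))

lemma beats_or_exists_smaller_of_right_wins (hx : P (Cat a₁ a₂) = x) (h₂ : P a₂ = x) (h₁ : P a₁ ≠ x)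
    (hz : z ∈ a₁.ext) :
    Beats P x z ∨ ∃ b : List2 X, P b = x ∧ z ∈ b.ext ∧ b.ext.card < (Cat a₁ a₂).ext.card := by
  have hwin : binChoice P (P a₁) x = x :=
    calc binChoice P (P a₁) x = P (Cat a₁ a₂) := by rw [P_cat hP hS, h₂]
      _ = x := hx
  by_cases hz₁ : z = P a₁
  · exact Or.inl (Or.inr (hz₁ ▸ hwin))
  have hxa₂ : x ∈ a₂.ext := h₂ ▸ hP a₂
  obtain ⟨b, hb, hPb⟩ := hT.1 a₁ (Sing2 x) x (P a₁) (by rwa [P_cat hP hS, P_sing2 hP]) rfl h₁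
  have hsub : (Cat b (Sing2 x)).ext ⊆ (Cat a₁ a₂).ext.erase (P a₁) := by
    intro w
    simp only [ext_cat, ext_sing2, hb, Finset.mem_union, Finset.mem_singleton, Finset.mem_sdiff,
      Finset.mem_erase]
    rintro ((⟨hw, hne⟩ | rfl) | rfl)
    exacts [⟨hne, Or.inl hw⟩, ⟨Ne.symm h₁, Or.inr hxa₂⟩, ⟨Ne.symm h₁, Or.inr hxa₂⟩]
  refine Or.inr ⟨Cat b (Sing2 x), hPb, by simp [hb, hz, hz₁], Finset.card_lt_card ?_⟩
  exact hsub.trans_ssubset (Finset.erase_ssubset (Finset.mem_union_left _ (hP a₁)))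

theorem beats_of_mem {a : List2 X} (ha : P a = x) (hz : z ∈ a.ext) : Beats P x z := by
  suffices h : ∀ n, ∀ a : List2 X, a.ext.card ≤ n → P a = x → z ∈ a.ext → Beats P x z from
    h _ a le_rfl ha hz
  intro n
  induction n using Nat.strong_induction_on with
  | _ n ihn =>
  intro a
  induction a with
  | Sing2 w =>
    rintro - hw hz
    rw [P_sing2 hP] at hw
    rw [ext_sing2, Finset.mem_singleton] at hz
    subst hw hz
    exact Or.inl (binChoice_self hP z)
  | Cat a₁ a₂ ih₁ ih₂ =>
    intro hn hx hz
    have hn₁ : a₁.ext.card ≤ n := (Finset.card_le_card Finset.subset_union_left).trans hn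
    have hn₂ : a₂.ext.card ≤ n := (Finset.card_le_card Finset.subset_union_right).trans hn
    have descend : (Beats P x z ∨ ∃ b : List2 X, P b = x ∧ z ∈ b.ext ∧
        b.ext.card < (Cat a₁ a₂).ext.card) → Beats P x z := by
      rintro (h | ⟨b, hb, hzb, hlt⟩)
      exacts [h, ihn _ (hlt.trans_le hn) b le_rfl hb hzb]
    rw [ext_cat, Finset.mem_union] at hz
    rcases P_cat_eq_or hS a₁ a₂ with h | h
    · have h₁ : P a₁ = x := h.symm.trans hx
      by_cases hz₁ : z ∈ a₁.ext
      · exact ih₁ hn₁ h₁ hz₁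
      by_cases h₂ : P a₂ = x
      · exact ih₂ hn₂ h₂ (hz.resolve_left hz₁)
      exact descend (beats_or_exists_smaller_of_left_wins hP hS hT hx h₁ h₂ (hz.resolve_left hz₁))
    · have h₂ : P a₂ = x := h.symm.trans hx
      by_cases hz₂ : z ∈ a₂.ext
      · exact ih₂ hn₂ h₂ hz₂
      by_cases h₁ : P a₁ = x
      · exact ih₁ hn₁ h₁ (hz.resolve_right hz₂)
      exact descend (beats_or_exists_smaller_of_right_wins hP hS hT hx h₂ h₁ (hz.resolve_right hz₂))

theorem beats_trans {y : X} (hxy : Beats P x y) (hyz : Beats P y z) : Beats P x z := by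
  obtain ⟨c, hc, hPc⟩ := exists_ext_pair_of_beats hyz
  have hzc : z ∈ c.ext := by simp [hc]
  rcases hxy with h | h
  · exact beats_of_mem hP hS hT (a := Cat (Sing2 x) c)
      (by rw [P_cat hP hS, P_sing2 hP, hPc, h]) (by simp [hzc])
  · exact beats_of_mem hP hS hT (a := Cat c (Sing2 x))
      (by rw [P_cat hP hS, P_sing2 hP, hPc, h]) (by simp [hzc])

end TIIA

end List2

/-- For a decision procedure on `List2 X` that is strongly inductive
and satisfies T-independence of irrelevant alternatives, the choice correspondence
`C_P` is rationalizable by a complete and transitive relation. -/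
theorem stmt_19 {X : Type} [DecidableEq X] (P : List2 X → X)
    (hP : ∀ a : List2 X, P a ∈ a.ext)
    (hSIND : ∀ x y : X,
      (∀ a b : List2 X, P a = x → P b = y → P (List2.Cat a b) = x) ∨
      (∀ a b : List2 X, P a = x → P b = y → P (List2.Cat a b) = y))
    (hTIIA₁ : ∀ (a₁ a₂ : List2 X) (x y : X),
      P (List2.Cat a₁ a₂) = x → P a₁ = y → y ≠ x →
        ∃ b : List2 X, b.ext = (a₁.ext \ {y}) ∪ {x} ∧ P (List2.Cat b a₂) = x)
    (hTIIA₂ : ∀ (a₁ a₂ : List2 X) (x y : X),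
      P (List2.Cat a₁ a₂) = x → P a₂ = y → y ≠ x →
        ∃ b : List2 X, b.ext = (a₂.ext \ {y}) ∪ {x} ∧ P (List2.Cat a₁ b) = x) :
    ∃ R : X → X → Prop, (∀ x y : X, R x y ∨ R y x) ∧ Transitive R ∧
      ∀ A : Finset X, A.Nonempty →
        {x : X | ∃ a : List2 X, a.ext = A ∧ P a = x} =
          {x : X | x ∈ A ∧ ∀ y ∈ A, R x y} := by
  have hT : List2.SatisfiesTIIA P := ⟨hTIIA₁, hTIIA₂⟩
  refine ⟨List2.Beats P, List2.beats_total hP, fun _ _ _ => List2.beats_trans hP hSIND hT,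
    fun A _ => ?_⟩
  ext x
  constructor
  · rintro ⟨a, rfl, rfl⟩
    exact ⟨hP a, fun y hy => List2.beats_of_mem hP hSIND hT rfl hy⟩
  · rintro ⟨hx, hbeats⟩
    obtain ⟨a, ha, hPa⟩ := List2.exists_ext_insert_of_forall_beats hP hSIND A hbeats
    exact ⟨a, ha.trans (Finset.insert_eq_of_mem hx), hPa⟩
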